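/- Let S be an additively divisible semiring (commutative, possibly without neutral elements) generated by a single element w, and suppose that either w = k·w for some k ≥ 2, or w = k·w + u for some k ≥ 2 and some u ∈ S. Then either x + x = x for every x ∈ S, or there exists a ∈ S such that x = 2·x + a·x for every x ∈ S. -/

import Mathlib

/-- `nmul n a` is the `n`-fold sum `a + ⋯ + a` (for `n ≥ 1`; `nmul 0 a = a` is junk). -/
def nmul {S : Type*} [Add S] (n : ℕ) (a : S) : S :=
  Nat.rec a (fun _ b => b + a) (n - 1)

/-- The subsemiring generated by `A`: the smallest subset of `S` containing `A`
and closed under addition and multiplication. -/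
def genClosure {S : Type*} [Add S] [Mul S] (A : Set S) : Set S :=
  ⋂₀ {T : Set S | A ⊆ T ∧ (∀ x ∈ T, ∀ y ∈ T, x + y ∈ T) ∧ (∀ x ∈ T, ∀ y ∈ T, x * y ∈ T)}

/-!
A relation `w = n·w + a·w` (or `w = n·w`) satisfied by the generator is stable under sums and
under multiplication on the right, so every element satisfies it. Apply this to `b` with
`(n-1)·b = w`: then `b = b + (n-1)·b + a·b = b + (w + a·b)`, so `b` absorbs `w + a·b`, hence so
does `w = (n-1)·b`, i.e. `w = 2·w + a·b`; and `a·b = c·w` because every product is a multiple of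
the generator. In the relation without `a` the same computation gives `w + w = w`.
-/

section Nmul

variable {S : Type*}

theorem nmul_two [Add S] (a : S) : nmul 2 a = a + a := rfl

theorem nmul_succ [Add S] {n : ℕ} (hn : 1 ≤ n) (a : S) : nmul (n + 1) a = nmul n a + a := by
  obtain ⟨m, rfl⟩ := Nat.exists_eq_add_of_le' hn
  rfl

theorem nmul_mul [Add S] [Mul S] [RightDistribClass S] (n : ℕ) (a b : S) :
    nmul n a * b = nmul n (a * b) := by
  unfold nmul
  induction n - 1 with
  | zero => rfl
  | succ k ih => simp only [add_mul, ih]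

variable [AddCommSemigroup S]

theorem nmul_add (n : ℕ) (a b : S) : nmul n (a + b) = nmul n a + nmul n b := by
  unfold nmul
  induction n - 1 with
  | zero => rfl
  | succ k ih => simp only [ih, add_add_add_comm]

theorem nmul_add_of_add_eq {x z : S} (h : x + z = x) (n : ℕ) : nmul n x + z = nmul n x := by
  unfold nmul
  induction n - 1 with
  | zero => exact h
  | succ k _ => simp only [add_assoc, h]

end Nmul

section Generator

variable {S : Type*} {w : S}

@[elab_as_elim]
theorem genClosure_induction [Add S] [Mul S] (hgen : genClosure {w} = Set.univ) {p : S → Prop}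
    (x : S) (mem : p w) (add : ∀ x y, p x → p y → p (x + y))
    (mul : ∀ x y, p x → p y → p (x * y)) : p x := by
  have hx : x ∈ genClosure {w} := hgen ▸ Set.mem_univ x
  exact Set.mem_sInter.mp hx {x | p x}
    ⟨Set.singleton_subset_iff.mpr mem, fun x hx y hy => add x y hx hy,
      fun x hx y hy => mul x y hx hy⟩

theorem exists_mul_eq_mul_generator [Add S] [Semigroup S] [LeftDistribClass S]
    [RightDistribClass S] (hgen : genClosure {w} = Set.univ) (x y : S) : ∃ c, x * y = c * w := by
  induction y using genClosure_induction hgen generalizing x with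
  | mem => exact ⟨x, rfl⟩
  | add y z hy hz =>
    obtain ⟨c, hc⟩ := hy x
    obtain ⟨d, hd⟩ := hz x
    exact ⟨c + d, by rw [mul_add, hc, hd, add_mul]⟩
  | mul y z _ hz =>
    obtain ⟨c, hc⟩ := hz (x * y)
    exact ⟨c, by rw [← mul_assoc, hc]⟩

variable [AddCommSemigroup S]

theorem eq_nmul_of_generator [Mul S] [RightDistribClass S] (hgen : genClosure {w} = Set.univ)
    {n : ℕ} (h : w = nmul n w) (x : S) : x = nmul n x := by
  induction x using genClosure_induction hgen with
  | mem => exact h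
  | add x y hx hy => rw [nmul_add, ← hx, ← hy]
  | mul x y hx _ => rw [← nmul_mul, ← hx]

theorem add_self_of_eq_nmul [Mul S] [RightDistribClass S] (hgen : genClosure {w} = Set.univ)
    {p : ℕ} (hp : 2 ≤ p) (h : w = nmul p w) {b : S} (hb : nmul (p - 1) b = w) (x : S) :
    x + x = x := by
  have hbw : b + w = b := by
    calc b + w = nmul (p - 1 + 1) b := by rw [nmul_succ (by omega), hb, add_comm]
      _ = b := by rw [Nat.sub_add_cancel (by omega), ← eq_nmul_of_generator hgen h b]
  have hww : w = nmul 2 w := by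
    calc w = nmul (p - 1) b := hb.symm
      _ = nmul (p - 1) b + w := (nmul_add_of_add_eq hbw _).symm
      _ = nmul 2 w := by rw [hb, nmul_two]
  exact (eq_nmul_of_generator hgen hww x).symm

variable [Semigroup S] [LeftDistribClass S] [RightDistribClass S]

theorem eq_nmul_add_mul_of_generator (hgen : genClosure {w} = Set.univ) {n : ℕ} {a : S}
    (h : w = nmul n w + a * w) (x : S) : x = nmul n x + a * x := by
  induction x using genClosure_induction hgen with
  | mem => exact h
  | add x y hx hy => rw [nmul_add, mul_add, add_add_add_comm, ← hx, ← hy]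
  | mul x y hx _ => rw [← nmul_mul, ← mul_assoc, ← add_mul, ← hx]

theorem exists_forall_eq_nmul_two_add_mul (hgen : genClosure {w} = Set.univ) {n : ℕ}
    (hn : 2 ≤ n) {a : S} (h : w = nmul n w + a * w) {b : S} (hb : nmul (n - 1) b = w) :
    ∃ c, ∀ x : S, x = nmul 2 x + c * x := by
  obtain ⟨c, hc⟩ := exists_mul_eq_mul_generator hgen a b
  have hbw : b + (w + a * b) = b := by
    calc b + (w + a * b) = nmul (n - 1 + 1) b + a * b := by
          rw [nmul_succ (by omega), hb, add_assoc, add_left_comm]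
      _ = b := by rw [Nat.sub_add_cancel (by omega), ← eq_nmul_add_mul_of_generator hgen h b]
  refine ⟨c, eq_nmul_add_mul_of_generator hgen ?_⟩
  calc w = nmul (n - 1) b := hb.symm
    _ = nmul (n - 1) b + (w + a * b) := (nmul_add_of_add_eq hbw _).symm
    _ = nmul 2 w + c * w := by rw [hb, hc, nmul_two, add_assoc]

theorem exists_nmul_add_eq (hgen : genClosure {w} = Set.univ) (u : S) {n : ℕ} (hn : 1 ≤ n) :
    ∃ m, n ≤ m ∧ (nmul n w + u = nmul m w ∨ ∃ c, nmul n w + u = nmul m w + c * w) := by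
  induction u using genClosure_induction hgen generalizing n with
  | mem => exact ⟨n + 1, n.le_succ, Or.inl (nmul_succ hn w).symm⟩
  | add u v hu hv =>
    obtain ⟨m, hnm, hm | ⟨c, hc⟩⟩ := hu hn
    · obtain ⟨l, hml, hl⟩ := hv (hn.trans hnm)
      exact ⟨l, hnm.trans hml, by rwa [← add_assoc, hm]⟩
    · obtain ⟨l, hml, hl | ⟨d, hd⟩⟩ := hv (hn.trans hnm)
      · refine ⟨l, hnm.trans hml, Or.inr ⟨c, ?_⟩⟩
        rw [← add_assoc, hc, add_right_comm, hl]
      · refine ⟨l, hnm.trans hml, Or.inr ⟨d + c, ?_⟩⟩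
        rw [← add_assoc, hc, add_right_comm, hd, add_mul, add_assoc]
  | mul u v _ _ =>
    obtain ⟨c, hc⟩ := exists_mul_eq_mul_generator hgen u v
    exact ⟨n, le_rfl, Or.inr ⟨c, by rw [hc]⟩⟩

end Generator

theorem stmt_18 {S : Type*} [AddCommSemigroup S] [CommSemigroup S]
    (hdl : ∀ a b c : S, a * (b + c) = a * b + a * c)
    (hdr : ∀ a b c : S, (a + b) * c = a * c + b * c)
    (hdiv : ∀ a : S, ∀ n : ℕ, 1 ≤ n → ∃ b : S, nmul n b = a)
    (w : S) (hgen : genClosure {w} = Set.univ)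
    (hw : (∃ k : ℕ, 2 ≤ k ∧ w = nmul k w) ∨ (∃ k : ℕ, 2 ≤ k ∧ ∃ u : S, w = nmul k w + u)) :
    (∀ x : S, x + x = x) ∨ (∃ a : S, ∀ x : S, x = nmul 2 x + a * x) := by
  have : LeftDistribClass S := ⟨hdl⟩
  have : RightDistribClass S := ⟨hdr⟩
  have idempotent {p : ℕ} (hp : 2 ≤ p) (h : w = nmul p w) : ∀ x : S, x + x = x := by
    obtain ⟨b, hb⟩ := hdiv w (p - 1) (by omega)
    exact add_self_of_eq_nmul hgen hp h hb
  rcases hw with ⟨k, hk, h⟩ | ⟨k, hk, u, h⟩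
  · exact Or.inl (idempotent hk h)
  obtain ⟨m, hkm, hu | ⟨c, hc⟩⟩ := exists_nmul_add_eq hgen u (by omega : 1 ≤ k)
  · exact Or.inl (idempotent (hk.trans hkm) (h.trans hu))
  · obtain ⟨b, hb⟩ := hdiv w (m - 1) (by omega)
    exact Or.inr (exists_forall_eq_nmul_two_add_mul hgen (hk.trans hkm) (h.trans hc) hb)
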